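/- Let P = (H, V, τ, A) be a span program on [q]^n, let x ∈ [q]^n have a positive witness with witness size w(P, x), let C ≥ 2, and let α > 0 satisfy α² ≥ C·w(P, x). Then ‖P_0(U(P, x, α)) |0̂⟩‖² ≥ α² / (α² + w(P, x)) ≥ 1 − 1/C. -/

import Mathlib

noncomputable section

/-- A span program `P = (H, V, τ, A)` on `[q]^m`:
finite-dimensional complex inner product spaces `H` and `V`, an orthogonal
decomposition `H = H_1 ⊕ ⋯ ⊕ H_m ⊕ H_true ⊕ H_false`, subspaces
`H_{j,a} ⊆ H_j` with `Σ_a H_{j,a} = H_j`, a target `τ ∈ V` and `A : H → V`. -/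
structure SpanProgram (q m : ℕ) where
  H : Type
  V : Type
  [nH : NormedAddCommGroup H]
  [iH : InnerProductSpace ℂ H]
  [fH : FiniteDimensional ℂ H]
  [nV : NormedAddCommGroup V]
  [iV : InnerProductSpace ℂ V]
  [fV : FiniteDimensional ℂ V]
  Hj : Fin m → Submodule ℂ H
  Htrue : Submodule ℂ H
  Hfalse : Submodule ℂ H
  ortho : ∀ i i' : Fin m ⊕ Bool, i ≠ i' →
    (Sum.elim Hj (fun b => if b then Htrue else Hfalse) i).IsOrtho
      (Sum.elim Hj (fun b => if b then Htrue else Hfalse) i')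
  spans : (⨆ j, Hj j) ⊔ Htrue ⊔ Hfalse = ⊤
  Hja : Fin m → Fin q → Submodule ℂ H
  Hja_le : ∀ j a, Hja j a ≤ Hj j
  Hja_sup : ∀ j, (⨆ a, Hja j a) = Hj j
  tau : V
  A : H →ₗ[ℂ] V

attribute [instance] SpanProgram.nH SpanProgram.iH SpanProgram.fH
attribute [instance] SpanProgram.nV SpanProgram.iV SpanProgram.fV

namespace SpanProgram

variable {q m : ℕ} (P : SpanProgram q m)

/-- `H(x) = H_{1,x_1} ⊕ ⋯ ⊕ H_{m,x_m} ⊕ H_true`. -/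
def Hx (x : Fin m → Fin q) : Submodule ℂ P.H :=
  (⨆ j, P.Hja j (x j)) ⊔ P.Htrue

/-- `w` is a positive witness for `x`: `w ∈ H(x)` and `A w = τ`. -/
def PosWitness (x : Fin m → Fin q) (w : P.H) : Prop :=
  w ∈ P.Hx x ∧ P.A w = P.tau

/-- `ω` is a negative witness for `x`: `ω(τ) = 1` and `ω ∘ A ∘ Π_{H(x)} = 0`. -/
def NegWitness (x : Fin m → Fin q) (ω : P.V →ₗ[ℂ] ℂ) : Prop :=
  ω P.tau = 1 ∧ ∀ h ∈ P.Hx x, ω (P.A h) = 0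

def HasPos (x : Fin m → Fin q) : Prop := ∃ w, P.PosWitness x w

def HasNeg (x : Fin m → Fin q) : Prop := ∃ ω, P.NegWitness x ω

/-- positive witness size: `min{‖w‖² : w a positive witness for x}`. -/
def posSize (x : Fin m → Fin q) : ℝ :=
  sInf {r : ℝ | ∃ w, P.PosWitness x w ∧ r = ‖w‖ ^ 2}

/-- negative witness size: `min{‖ω∘A‖² : ω a negative witness for x}`, where
`‖ω∘A‖` is the norm of (the Riesz representative of) the functional `ω∘A`. -/
def negSize (x : Fin m → Fin q) : ℝ :=
  sInf {r : ℝ | ∃ ω, P.NegWitness x ω ∧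
    r = ‖LinearMap.toContinuousLinearMap (ω ∘ₗ P.A)‖ ^ 2}

open Classical in
/-- the witness size `w(P,x)`. -/
def witSize (x : Fin m → Fin q) : ℝ :=
  if P.HasPos x then P.posSize x else P.negSize x

/-- `P` decides `f` on `X`: every `x ∈ X` with `f x = 1` has a positive witness and
every `x ∈ X` with `f x = 0` has a negative witness. -/
def Decides (X : Set (Fin m → Fin q)) (f : (Fin m → Fin q) → Bool) : Prop :=
  ∀ x ∈ X, (f x = true → P.HasPos x) ∧ (f x = false → P.HasNeg x)

end SpanProgram


namespace SpanProgram

variable {q m : ℕ} (P : SpanProgram q m)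

/-- `H̃ = H ⊕ ℂ|0̂⟩` (with the `L²` direct-sum inner product). -/
def Htilde : Type := WithLp 2 (P.H × ℂ)

instance : NormedAddCommGroup P.Htilde :=
  inferInstanceAs (NormedAddCommGroup (WithLp 2 (P.H × ℂ)))
instance : InnerProductSpace ℂ P.Htilde :=
  inferInstanceAs (InnerProductSpace ℂ (WithLp 2 (P.H × ℂ)))
instance : FiniteDimensional ℂ P.Htilde :=
  inferInstanceAs (FiniteDimensional ℂ (WithLp 2 (P.H × ℂ)))

/-- the canonical linear identification of `H̃` with `H × ℂ`. -/
def tildeEquiv : P.Htilde ≃ₗ[ℂ] P.H × ℂ := WithLp.linearEquiv 2 ℂ (P.H × ℂ)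

/-- the unit vector `|0̂⟩ ∈ H̃`, orthogonal to `H`. -/
def zeroHat : P.Htilde := P.tildeEquiv.symm (0, 1)

/-- the isometric embedding of `H` into `H̃`. -/
def embed : P.H →ₗ[ℂ] P.Htilde :=
  P.tildeEquiv.symm.toLinearMap ∘ₗ LinearMap.inl ℂ P.H ℂ

/-- `A_α : H̃ → V`, with `A_α|0̂⟩ = τ/α` and `A_α = A` on `H`. -/
def Aalpha (α : ℝ) : P.Htilde →ₗ[ℂ] P.V :=
  (P.A.coprod (LinearMap.toSpanSingleton ℂ P.V (((α : ℂ))⁻¹ • P.tau))) ∘ₗ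
    P.tildeEquiv.toLinearMap

/-- `H̃(x) = H(x) ⊕ ℂ|0̂⟩`. -/
def HxTilde (x : Fin m → Fin q) : Submodule ℂ P.Htilde :=
  ((P.Hx x).prod (⊤ : Submodule ℂ ℂ)).comap P.tildeEquiv.toLinearMap

/-- orthogonal projection onto a submodule, as an endomorphism. -/
def projL (S : Submodule ℂ P.Htilde) : P.Htilde →ₗ[ℂ] P.Htilde :=
  S.subtype ∘ₗ (S.orthogonalProjection).toLinearMap

/-- `Λ_α`: the orthogonal projection of `H̃` onto `ker A_α`. -/
def Lambda (α : ℝ) : P.Htilde →ₗ[ℂ] P.Htilde :=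
  P.projL (LinearMap.ker (P.Aalpha α))

/-- `Π_x`: the orthogonal projection of `H̃` onto `H̃(x)`. -/
def Pix (x : Fin m → Fin q) : P.Htilde →ₗ[ℂ] P.Htilde :=
  P.projL (P.HxTilde x)

/-- `U(P, x, α) = (2Π_x − I)(2Λ_α − I)`. -/
def U (x : Fin m → Fin q) (α : ℝ) : P.Htilde →ₗ[ℂ] P.Htilde :=
  (2 • P.Pix x - LinearMap.id) ∘ₗ (2 • P.Lambda α - LinearMap.id)

end SpanProgram


/-!
For a positive witness `w` of `x`, the vector `u = |0̂⟩ - α⁻¹ w` lies both in `ker A_α` (since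
`A w = τ`) and in `H̃(x)`, so it is fixed by both reflections and hence by `U`. As
`⟪u, |0̂⟩⟫ = 1`, Cauchy–Schwarz against the projection onto the fixed space gives
`‖P_0 |0̂⟩‖² ≥ 1 / ‖u‖² = α² / (α² + ‖w‖²)`. Passing to the infimum over witnesses gives the
bound with `w(P, x)`, and `α² ≥ C w(P, x)` turns it into `1 - 1/C`.
-/

section InnerProductSpace

variable {𝕜 E : Type*} [RCLike 𝕜] [NormedAddCommGroup E] [InnerProductSpace 𝕜 E]

theorem norm_inner_le_norm_mul_norm_starProjection {K : Submodule 𝕜 E}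
    [K.HasOrthogonalProjection] {v : E} (hv : v ∈ K) (z : E) :
    ‖(inner 𝕜 v z : 𝕜)‖ ≤ ‖v‖ * ‖K.starProjection z‖ := by
  have hvz : (inner 𝕜 v z : 𝕜) = inner 𝕜 v (K.starProjection z) := by
    rw [← Submodule.inner_starProjection_left_eq_right,
      K.starProjection_eq_self_iff.mpr hv]
  rw [hvz]
  exact norm_inner_le_norm v _

theorem inv_norm_sq_le_norm_starProjection_sq {K : Submodule 𝕜 E}
    [K.HasOrthogonalProjection] {v z : E} (hv : v ∈ K) (hvz : (inner 𝕜 v z : 𝕜) = 1) :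
    (‖v‖ ^ 2)⁻¹ ≤ ‖K.starProjection z‖ ^ 2 := by
  have hcs := norm_inner_le_norm_mul_norm_starProjection hv z
  rw [hvz, norm_one] at hcs
  have h1 : 1 ≤ ‖v‖ ^ 2 * ‖K.starProjection z‖ ^ 2 := by
    rw [← mul_pow]
    exact one_le_pow₀ hcs
  have hv : 0 < ‖v‖ ^ 2 := by
    by_contra! h
    nlinarith [sq_nonneg ‖v‖, sq_nonneg ‖K.starProjection z‖]
  rwa [inv_le_iff_one_le_mul₀ hv, mul_comm]

end InnerProductSpace

theorem LinearMap.reflections_comp_apply_of_apply_eq_self {R M : Type*} [Ring R]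
    [AddCommGroup M] [Module R M] {p l : M →ₗ[R] M} {u : M} (hp : p u = u) (hl : l u = u) :
    ((2 • p - LinearMap.id) ∘ₗ (2 • l - LinearMap.id)) u = u := by
  simp [hp, hl, two_smul]

theorem div_add_sInf_le {a N : ℝ} {S : Set ℝ} (ha : 0 < a) (hS : S.Nonempty)
    (hS0 : ∀ t ∈ S, 0 ≤ t) (hN : ∀ t ∈ S, a / (a + t) ≤ N) :
    a / (a + sInf S) ≤ N := by
  obtain ⟨t₀, ht₀⟩ := hS
  have hNpos : 0 < N := (div_pos ha (by linarith [hS0 t₀ ht₀])).trans_le (hN t₀ ht₀)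
  have hlow : a / N - a ≤ sInf S := by
    refine le_csInf ⟨t₀, ht₀⟩ fun t ht => ?_
    have h := (div_le_iff₀ (by linarith [hS0 t ht])).mp (hN t ht)
    rw [sub_le_iff_le_add, div_le_iff₀ hNpos]
    nlinarith
  rw [sub_le_iff_le_add, div_le_iff₀ hNpos] at hlow
  rw [div_le_iff₀ (by linarith [Real.sInf_nonneg hS0])]
  nlinarith

theorem one_sub_one_div_le_div_add {a s C : ℝ} (ha : 0 < a) (hs : 0 ≤ s) (hC : 0 < C)
    (hCs : C * s ≤ a) : 1 - 1 / C ≤ a / (a + s) := by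
  rw [le_div_iff₀ (by positivity)]
  have hsC : s ≤ (a + s) / C := by
    rw [le_div_iff₀ hC]
    nlinarith
  have hexp : (1 - 1 / C) * (a + s) = (a + s) - (a + s) / C := by
    field_simp
  linarith

namespace SpanProgram

variable {q m : ℕ} (P : SpanProgram q m)

theorem projL_apply (S : Submodule ℂ P.Htilde) (v : P.Htilde) :
    P.projL S v = S.starProjection v :=
  rfl

theorem norm_sq_eq_norm_fst_sq_add_norm_snd_sq (v : P.Htilde) :
    ‖v‖ ^ 2 = ‖v.fst‖ ^ 2 + ‖v.snd‖ ^ 2 :=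
  WithLp.prod_norm_sq_eq_of_L2 v

theorem posSize_nonneg (x : Fin m → Fin q) : 0 ≤ P.posSize x :=
  Real.sInf_nonneg fun _ ⟨_, _, hr⟩ => hr ▸ sq_nonneg _

def witnessVector (α : ℝ) (w : P.H) : P.Htilde :=
  P.zeroHat - (α : ℂ)⁻¹ • P.embed w

theorem tildeEquiv_witnessVector (α : ℝ) (w : P.H) :
    P.tildeEquiv (P.witnessVector α w) = (-(α : ℂ)⁻¹ • w, 1) := by
  simp [witnessVector, zeroHat, embed]

theorem witnessVector_fst (α : ℝ) (w : P.H) :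
    (P.witnessVector α w).fst = -(α : ℂ)⁻¹ • w :=
  congrArg Prod.fst (P.tildeEquiv_witnessVector α w)

theorem witnessVector_snd (α : ℝ) (w : P.H) : (P.witnessVector α w).snd = 1 :=
  congrArg Prod.snd (P.tildeEquiv_witnessVector α w)

theorem witnessVector_mem_ker_Aalpha (α : ℝ) {w : P.H} (hw : P.A w = P.tau) :
    P.witnessVector α w ∈ LinearMap.ker (P.Aalpha α) := by
  rw [LinearMap.mem_ker, Aalpha, LinearMap.comp_apply, LinearEquiv.coe_coe,
    tildeEquiv_witnessVector]
  simp [hw]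

theorem witnessVector_mem_HxTilde (x : Fin m → Fin q) (α : ℝ) {w : P.H} (hw : w ∈ P.Hx x) :
    P.witnessVector α w ∈ P.HxTilde x := by
  rw [HxTilde, Submodule.mem_comap, LinearEquiv.coe_coe, tildeEquiv_witnessVector,
    Submodule.mem_prod]
  exact ⟨Submodule.smul_mem _ _ hw, trivial⟩

theorem witnessVector_mem_eigenspace_U (x : Fin m → Fin q) (α : ℝ) {w : P.H}
    (hw : P.PosWitness x w) : P.witnessVector α w ∈ Module.End.eigenspace (P.U x α) 1 := by
  rw [Module.End.mem_eigenspace_iff, one_smul]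
  exact LinearMap.reflections_comp_apply_of_apply_eq_self
    ((P.HxTilde x).starProjection_eq_self_iff.mpr (P.witnessVector_mem_HxTilde x α hw.1))
    ((LinearMap.ker (P.Aalpha α)).starProjection_eq_self_iff.mpr
      (P.witnessVector_mem_ker_Aalpha α hw.2))

theorem inner_witnessVector_zeroHat (α : ℝ) (w : P.H) :
    (inner ℂ (P.witnessVector α w) P.zeroHat : ℂ) = 1 := by
  change inner ℂ (P.witnessVector α w).fst (0 : P.H) +
    inner ℂ (P.witnessVector α w).snd (1 : ℂ) = 1
  simp [witnessVector_snd]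

theorem norm_witnessVector_sq (α : ℝ) (w : P.H) :
    ‖P.witnessVector α w‖ ^ 2 = 1 + ‖w‖ ^ 2 / α ^ 2 := by
  rw [norm_sq_eq_norm_fst_sq_add_norm_snd_sq, witnessVector_fst, witnessVector_snd, norm_smul,
    norm_neg, norm_inv, Complex.norm_real, Real.norm_eq_abs, mul_pow, inv_pow, sq_abs]
  simp [div_eq_inv_mul, add_comm]

theorem div_add_norm_sq_le_overlap (x : Fin m → Fin q) {α : ℝ} (hα : α ≠ 0) {w : P.H}
    (hw : P.PosWitness x w) :
    α ^ 2 / (α ^ 2 + ‖w‖ ^ 2) ≤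
      ‖P.projL (Module.End.eigenspace (P.U x α) 1) P.zeroHat‖ ^ 2 := by
  have h := inv_norm_sq_le_norm_starProjection_sq (P.witnessVector_mem_eigenspace_U x α hw)
    (P.inner_witnessVector_zeroHat α w)
  rw [norm_witnessVector_sq] at h
  rw [projL_apply]
  convert h using 1
  field_simp

theorem div_add_posSize_le_overlap (x : Fin m → Fin q) (hx : P.HasPos x) {α : ℝ}
    (hα : 0 < α) :
    α ^ 2 / (α ^ 2 + P.posSize x) ≤
      ‖P.projL (Module.End.eigenspace (P.U x α) 1) P.zeroHat‖ ^ 2 := by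
  obtain ⟨w, hw⟩ := hx
  refine div_add_sInf_le (by positivity) ⟨_, w, hw, rfl⟩ (fun _ ⟨_, _, hr⟩ => hr ▸ sq_nonneg _)
    ?_
  rintro _ ⟨v, hv, rfl⟩
  exact P.div_add_norm_sq_le_overlap x hα.ne' hv

end SpanProgram

theorem positive_case_overlap_general {q n : ℕ}
    (P : SpanProgram q n) (x : Fin n → Fin q) (hx : P.HasPos x)
    (C : ℝ) (hC : 2 ≤ C) (α : ℝ) (hα : 0 < α)
    (hCα : C * P.posSize x ≤ α ^ 2) :
    α ^ 2 / (α ^ 2 + P.posSize x) ≤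
        ‖P.projL (Module.End.eigenspace (P.U x α) 1) P.zeroHat‖ ^ 2 ∧
      1 - 1 / C ≤ α ^ 2 / (α ^ 2 + P.posSize x) :=
  ⟨P.div_add_posSize_le_overlap x hx hα,
    one_sub_one_div_le_div_add (by positivity) (P.posSize_nonneg x) (by linarith) hCα⟩

/-- if `x` has a positive witness, `C ≥ 2` and `α² ≥ C·w(P,x)`, then
`‖P_0(U(P,x,α))|0̂⟩‖² ≥ α²/(α² + w(P,x)) ≥ 1 − 1/C`. -/
theorem positive_case_overlap {q n : ℕ} (hq : 2 ≤ q) (hn : 1 ≤ n)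
    (P : SpanProgram q n) (x : Fin n → Fin q) (hx : P.HasPos x)
    (C : ℝ) (hC : 2 ≤ C) (α : ℝ) (hα : 0 < α)
    (hCα : C * P.posSize x ≤ α ^ 2) :
    α ^ 2 / (α ^ 2 + P.posSize x) ≤
        ‖P.projL (Module.End.eigenspace (P.U x α) 1) P.zeroHat‖ ^ 2 ∧
      1 - 1 / C ≤ α ^ 2 / (α ^ 2 + P.posSize x) :=
  positive_case_overlap_general P x hx C hC α hα hCα
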